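/- Let A and B be modules over ℤ with symmetric ℤ-bilinear forms b_A and b_B, with B torsion-free, and let M = A × A × B × B × B carry the orthogonal direct sum form and the involution ρ(x,y,z₁,z₂,z₃) = (y,x,−z₁,z₃,z₂). Then the fixed submodule M⁺ = {l ∈ M : ρ(l) = l}, with the bilinear form restricted from M, is isometric to A × B equipped with the form 2·b_A ⊕ 2·b_B; explicitly, the map (x,z) ↦ (x,x,0,z,z) is a ℤ-linear bijection from A × B onto M⁺ under which the restricted form of M pulls back to 2b_A(x,x') + 2b_B(z,z'). -/

import Mathlib

/-- The fixed submodule `M⁺` of `ρ(x, y, z₁, z₂, z₃) = (y, x, -z₁, z₃, z₂)` on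
`M = A × A × B × B × B` (with `B` torsion-free), equipped with the restriction
of the orthogonal direct sum form, is isometric to `A × B` with the form
`2·b_A ⊕ 2·b_B`, via the ℤ-linear bijection `(x, z) ↦ (x, x, 0, z, z)`. -/
theorem fixed_submodule_isometric_to_twice_form
    {A B : Type*} [AddCommGroup A] [AddCommGroup B] [Module ℤ A] [Module ℤ B]
    [NoZeroSMulDivisors ℤ B]
    (bA : A →ₗ[ℤ] A →ₗ[ℤ] ℤ) (bB : B →ₗ[ℤ] B →ₗ[ℤ] ℤ)
    (hA : ∀ x y : A, bA x y = bA y x) (hB : ∀ x y : B, bB x y = bB y x)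
    (b : (A × A × B × B × B) → (A × A × B × B × B) → ℤ)
    (hb : ∀ u v : A × A × B × B × B,
      b u v = bA u.1 v.1 + bA u.2.1 v.2.1 + bB u.2.2.1 v.2.2.1
        + bB u.2.2.2.1 v.2.2.2.1 + bB u.2.2.2.2 v.2.2.2.2)
    (ρ : (A × A × B × B × B) → (A × A × B × B × B))
    (hρ : ∀ u : A × A × B × B × B,
      ρ u = (u.2.1, u.1, -u.2.2.1, u.2.2.2.2, u.2.2.2.1))
    (φ : A × B → A × A × B × B × B)
    (hφ : ∀ p : A × B, φ p = (p.1, p.1, 0, p.2, p.2)) :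
    (∀ p q : A × B, φ (p + q) = φ p + φ q) ∧
    (∀ (c : ℤ) (p : A × B), φ (c • p) = c • φ p) ∧
    Function.Injective φ ∧
    Set.range φ = {l : A × A × B × B × B | ρ l = l} ∧
    (∀ p q : A × B, b (φ p) (φ q) = 2 * bA p.1 q.1 + 2 * bB p.2 q.2) := by
  refine ⟨fun p q => by simp [hφ, Prod.ext_iff], fun c p => by
      simp [hφ, Prod.ext_iff]; exact (zsmul_zero c).symm, fun p q h => by
      rw [hφ p, hφ q, Prod.ext_iff, Prod.ext_iff, Prod.ext_iff, Prod.ext_iff] at h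
      exact Prod.ext h.1 h.2.2.2.1, ?_, fun p q => by
      simp [hφ, hb]; ring⟩
  ext u
  obtain ⟨x, y, z₁, z₂, z₃⟩ := u
  constructor
  · rintro ⟨p, hp⟩
    rw [hφ] at hp
    simp only [Set.mem_setOf_eq, ← hp, hρ, Prod.mk.injEq]
    simp
  · intro hu
    simp only [Set.mem_setOf_eq, hρ, Prod.mk.injEq] at hu
    obtain ⟨h1, h2, h3, h4, h5⟩ := hu
    have hz : z₁ = 0 := by
      have hsum : z₁ + z₁ = 0 := by
        nth_rewrite 1 [← h3]
        exact neg_add_cancel z₁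
      have h2z : (2 : ℤ) • z₁ = 0 := by
        rw [two_zsmul]
        exact hsum
      exact ((‹NoZeroSMulDivisors ℤ B›.eq_zero_or_eq_zero_of_smul_eq_zero (c := (2 : ℤ)) (x := z₁)) h2z).resolve_left (by norm_num)
    exact ⟨(x, z₂), by
      rw [hφ]
      simp_all⟩
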